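/- Fix positive integers i and n and a non-negative integer i-fold iterate index: for all non-negative integers a and a', the largest divisor of z^i(5^a·n) coprime to 5 equals the largest divisor of z^i(5^{a'}·n) coprime to 5. In other words, writing z^i(5^a·n) = c·5^{a_i} with gcd(c,5) = 1, the constant c does not depend on a. -/

import Mathlib

/-
Write `c(m)` for the part of `m` prime to 5. Since `n ∣ F_ℓ ↔ z n ∣ ℓ` and `gcd(F_a, F_b) = F_{gcd(a,b)}`,
`z` turns lcm's into lcm's. Binet's formula gives `F_{5k} = 5 F_k (5 F_k⁴ ± 5 F_k² + 1)`, so `ν₅(F_ℓ) = ν₅(ℓ)`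
and hence `z(5^e) = 5^e`. Writing `m = lcm(5^e, c(m))` then gives `c(z m) = c(z(c m))`, so `c ∘ z`
only depends on `c`, and so does `c ∘ z^[i]`; finally `c(5^a n) = c(n)`.
-/

/-- The order of appearance of `n` in the Fibonacci sequence: the smallest
positive integer `ℓ` such that `n` divides the `ℓ`-th Fibonacci number. -/
noncomputable def z (n : ℕ) : ℕ := sInf {ℓ : ℕ | 0 < ℓ ∧ n ∣ Nat.fib ℓ}

theorem exists_pos_dvd_fib {n : ℕ} (hn : n ≠ 0) : ∃ ℓ, 0 < ℓ ∧ n ∣ Nat.fib ℓ := by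
  have : NeZero n := ⟨hn⟩
  -- the Fibonacci shift `(x, y) ↦ (y, x + y)` is a permutation of the finite set `(ℤ/n)²`
  let s : Equiv.Perm (ZMod n × ZMod n) :=
    { toFun := fun p => (p.2, p.1 + p.2)
      invFun := fun p => (p.2 - p.1, p.1)
      left_inv := fun p => by simp
      right_inv := fun p => by simp }
  have hs : ∀ ℓ, (s ^ ℓ) (0, 1) = ((Nat.fib ℓ : ZMod n), (Nat.fib (ℓ + 1) : ZMod n)) := by
    intro ℓ
    induction ℓ with
    | zero => simp
    | succ ℓ ih =>
      rw [pow_succ', Equiv.Perm.mul_apply, ih, Nat.fib_add_two]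
      simp [s]
  refine ⟨orderOf s, orderOf_pos s, (ZMod.natCast_eq_zero_iff _ _).mp ?_⟩
  simpa [pow_orderOf_eq_one] using (congrArg Prod.fst (hs (orderOf s))).symm

theorem z_pos_and_dvd_fib {n : ℕ} (hn : n ≠ 0) : 0 < z n ∧ n ∣ Nat.fib (z n) :=
  Nat.sInf_mem (exists_pos_dvd_fib hn)

theorem dvd_fib_iff_z_dvd {n : ℕ} (hn : n ≠ 0) (ℓ : ℕ) : n ∣ Nat.fib ℓ ↔ z n ∣ ℓ := by
  obtain ⟨hz, hdvd⟩ := z_pos_and_dvd_fib hn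
  refine ⟨fun h => ?_, fun h => hdvd.trans (Nat.fib_dvd _ _ h)⟩
  rcases ℓ.eq_zero_or_pos with rfl | hℓ
  · exact dvd_zero _
  have hle : z n ≤ ℓ.gcd (z n) :=
    Nat.sInf_le ⟨Nat.gcd_pos_of_pos_left _ hℓ, Nat.fib_gcd ℓ (z n) ▸ Nat.dvd_gcd h hdvd⟩
  have hgcd : ℓ.gcd (z n) = z n := (Nat.le_of_dvd hz (Nat.gcd_dvd_right _ _)).antisymm hle
  exact hgcd ▸ Nat.gcd_dvd_left _ _

theorem z_lcm {m n : ℕ} (hm : m ≠ 0) (hn : n ≠ 0) : z (m.lcm n) = (z m).lcm (z n) := by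
  have hmn : m.lcm n ≠ 0 := Nat.lcm_ne_zero hm hn
  apply Nat.dvd_antisymm
  · rw [← dvd_fib_iff_z_dvd hmn]
    exact Nat.lcm_dvd ((dvd_fib_iff_z_dvd hm _).mpr (Nat.dvd_lcm_left _ _))
      ((dvd_fib_iff_z_dvd hn _).mpr (Nat.dvd_lcm_right _ _))
  · have hfib := (z_pos_and_dvd_fib hmn).2
    exact Nat.lcm_dvd ((dvd_fib_iff_z_dvd hm _).mp ((Nat.dvd_lcm_left m n).trans hfib))
      ((dvd_fib_iff_z_dvd hn _).mp ((Nat.dvd_lcm_right m n).trans hfib))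

theorem z_five : z 5 = 5 := by
  have h5 : z 5 ∣ 5 := (dvd_fib_iff_z_dvd (by norm_num) 5).mp (by decide)
  have h1 : ¬ z 5 ∣ 1 := by rw [← dvd_fib_iff_z_dvd (by norm_num)]; decide
  exact ((Nat.dvd_prime Nat.prime_five).mp h5).resolve_left fun h => h1 (h ▸ dvd_rfl)

theorem five_dvd_fib_iff (ℓ : ℕ) : 5 ∣ Nat.fib ℓ ↔ 5 ∣ ℓ := by
  rw [dvd_fib_iff_z_dvd (by norm_num), z_five]

open Real in
theorem fib_five_mul (k : ℕ) :
    (Nat.fib (5 * k) : ℤ) =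
      5 * Nat.fib k * (5 * Nat.fib k ^ 4 + 5 * (-1) ^ k * Nat.fib k ^ 2 + 1) := by
  have h5 : (√5) ^ 2 = 5 := Real.sq_sqrt (by norm_num)
  -- Binet's formula with `a = φ ^ k`, `b = ψ ^ k`, `ab = (-1) ^ k`, and
  -- `a⁵ - b⁵ = (a - b) ((a - b)⁴ + 5ab (a - b)² + 5 (ab)²)`
  have binet : ∀ a b : ℝ, a * b = (-1) ^ k → (a ^ 5 - b ^ 5) / √5 =
      5 * ((a - b) / √5) * (5 * ((a - b) / √5) ^ 4 + 5 * (-1) ^ k * ((a - b) / √5) ^ 2 + 1) := by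
    intro a b hab
    have hs : (a * b) ^ 2 = 1 := by rw [hab, ← pow_mul, mul_comm, pow_mul]; norm_num
    rw [← hab]
    field_simp
    rw [show √5 ^ 4 = (√5 ^ 2) ^ 2 by ring, h5]
    linear_combination 125 * (a - b) * hs
  have : (Nat.fib (5 * k) : ℝ) =
      5 * Nat.fib k * (5 * Nat.fib k ^ 4 + 5 * (-1) ^ k * Nat.fib k ^ 2 + 1) := by
    rw [coe_fib_eq, coe_fib_eq, pow_mul', pow_mul']
    exact binet _ _ (by rw [← mul_pow, goldenRatio_mul_goldenConj])
  exact_mod_cast this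

theorem padicValNat_fib_five_mul {k : ℕ} (hk : k ≠ 0) :
    padicValNat 5 (Nat.fib (5 * k)) = padicValNat 5 (Nat.fib k) + 1 := by
  have : Fact (Nat.Prime 5) := ⟨Nat.prime_five⟩
  obtain ⟨M, hfib, hM⟩ : ∃ M : ℤ, (Nat.fib (5 * k) : ℤ) = Nat.fib k * M * 5 ∧ ¬ (5 : ℤ) ∣ M :=
    ⟨5 * (Nat.fib k ^ 4 + (-1) ^ k * Nat.fib k ^ 2) + 1, by rw [fib_five_mul]; ring,
      by rw [Int.dvd_add_right (dvd_mul_right _ _)]; norm_num⟩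
  have hF : (Nat.fib k : ℤ) ≠ 0 := by simpa using hk
  have hM0 : M ≠ 0 := fun h => hM (h ▸ dvd_zero _)
  have hsucc := padicValInt_mul_eq_succ (p := 5) _ (mul_ne_zero hF hM0)
  rw [Nat.cast_ofNat] at hsucc
  rw [← padicValInt.of_nat, ← padicValInt.of_nat, hfib, hsucc, padicValInt.mul hF hM0,
    padicValInt.eq_zero_of_not_dvd hM, add_zero]

theorem padicValNat_fib (ℓ : ℕ) : padicValNat 5 (Nat.fib ℓ) = padicValNat 5 ℓ := by
  have : Fact (Nat.Prime 5) := ⟨Nat.prime_five⟩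
  induction ℓ using Nat.strong_induction_on with
  | _ ℓ ih =>
    by_cases h5 : 5 ∣ ℓ
    · obtain ⟨k, rfl⟩ := h5
      rcases eq_or_ne k 0 with rfl | hk
      · simp
      rw [padicValNat_fib_five_mul hk, ih k (by omega), padicValNat.mul (by norm_num) hk,
        padicValNat_self, add_comm]
    · rw [padicValNat.eq_zero_of_not_dvd h5,
        padicValNat.eq_zero_of_not_dvd (mt (five_dvd_fib_iff ℓ).mp h5)]

theorem five_pow_dvd_fib_iff (e ℓ : ℕ) : 5 ^ e ∣ Nat.fib ℓ ↔ 5 ^ e ∣ ℓ := by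
  have : Fact (Nat.Prime 5) := ⟨Nat.prime_five⟩
  rw [padicValNat_dvd_iff, padicValNat_dvd_iff, padicValNat_fib, Nat.fib_eq_zero]

theorem z_five_pow (e : ℕ) : z (5 ^ e) = 5 ^ e := by
  have hiff (ℓ : ℕ) : z (5 ^ e) ∣ ℓ ↔ 5 ^ e ∣ ℓ := by
    rw [← dvd_fib_iff_z_dvd (by positivity), five_pow_dvd_fib_iff]
  exact Nat.dvd_antisymm ((hiff _).mpr dvd_rfl) ((hiff _).mp dvd_rfl)

theorem ordCompl_self_pow_lcm {p : ℕ} (hp : p.Prime) (e : ℕ) {w : ℕ} (hw : w ≠ 0) :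
    ordCompl[p] ((p ^ e).lcm w) = ordCompl[p] w := by
  have hpe : p ^ e ≠ 0 := pow_ne_zero e hp.ne_zero
  refine Nat.eq_of_factorization_eq (Nat.ordCompl_pos p (Nat.lcm_ne_zero hpe hw)).ne'
    (Nat.ordCompl_pos p hw).ne' fun q => ?_
  rw [Nat.factorization_ordCompl, Nat.factorization_ordCompl, Nat.factorization_lcm hpe hw,
    hp.factorization_pow]
  rcases eq_or_ne q p with rfl | hq
  · simp
  · simp [Finsupp.erase_ne hq, Finsupp.single_eq_of_ne hq]

theorem ordCompl_z_ordCompl (m : ℕ) : ordCompl[5] (z (ordCompl[5] m)) = ordCompl[5] (z m) := by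
  rcases eq_or_ne m 0 with rfl | hm
  · simp
  set c := ordCompl[5] m
  have hc : c ≠ 0 := (Nat.ordCompl_pos 5 hm).ne'
  have hm_lcm : m = (5 ^ m.factorization 5).lcm c := by
    rw [((Nat.coprime_ordCompl Nat.prime_five hm).pow_left _).lcm_eq_mul,
      Nat.ordProj_mul_ordCompl_eq_self]
  rw [hm_lcm, z_lcm (by positivity) hc, z_five_pow,
    ordCompl_self_pow_lcm Nat.prime_five _ (z_pos_and_dvd_fib hc).1.ne']

theorem ordCompl_z_congr {x y : ℕ} (h : ordCompl[5] x = ordCompl[5] y) :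
    ordCompl[5] (z x) = ordCompl[5] (z y) := by
  rw [← ordCompl_z_ordCompl x, ← ordCompl_z_ordCompl y, h]

theorem apply_iterate_eq_of_apply_eq {α β : Type*} (f : α → β) {g : α → α}
    (hg : ∀ x y, f x = f y → f (g x) = f (g y)) (i : ℕ) {x y : α} (h : f x = f y) :
    f (g^[i] x) = f (g^[i] y) := by
  induction i generalizing x y with
  | zero => exact h
  | succ i ih => exact ih (hg x y h)

theorem coprime_part_const_general (i n : ℕ) (a a' : ℕ) :
    (z^[i] (5 ^ a * n)) / 5 ^ ((z^[i] (5 ^ a * n)).factorization 5) =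
      (z^[i] (5 ^ a' * n)) / 5 ^ ((z^[i] (5 ^ a' * n)).factorization 5) :=
  apply_iterate_eq_of_apply_eq (fun m => ordCompl[5] m) (fun _ _ => ordCompl_z_congr) i
    (by simp only [Nat.ordCompl_self_pow_mul n _ Nat.prime_five])

theorem coprime_part_const (i n : ℕ) (hi : 0 < i) (hn : 0 < n) (a a' : ℕ) :
    (z^[i] (5 ^ a * n)) / 5 ^ ((z^[i] (5 ^ a * n)).factorization 5) =
      (z^[i] (5 ^ a' * n)) / 5 ^ ((z^[i] (5 ^ a' * n)).factorization 5) :=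
  coprime_part_const_general i n a a'
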